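/- Let Ω ⊂ ℝ³ be a bounded open set, N ≥ 1, and m ≥ 1. Let Φ₁, …, Φ_m : ℝ³ → ℂᴺ be continuously differentiable with compact support contained in Ω. For d = (d¹, …, dᵐ) ∈ ℂᵐ set Ψ_d := Σ_{l=1}^m d^l Φ_l, and for each k ∈ {1,…,m} define G^k : ℂᵐ → ℂ by G^k(d) := ∫_Ω V_H(Ψ_d)(x) · ⟨Ψ_d(x), Φ_k(x)⟩_{ℂᴺ} dx, where V_H(Ψ_d)(x) := ∫_{ℝ³} ρ(Ψ_d)(y)/‖x − y‖ dy. Then each G^k is locally Lipschitz continuous: for every ε > 0 there exists L > 0 such that |G^k(d) − G^k(b)| ≤ L |d − b| for all d, b ∈ ℂᵐ with |d| ≤ ε and |b| ≤ ε. -/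

import Mathlib

/-!
The Hartree potential of a density bounded by `C` and supported in the ball of radius `R` is
bounded on that ball by `C ∫_{‖z‖ < 2R} ‖z‖⁻¹ dz`, which is finite in dimension at least two.
The potential is linear in the density, so it is bounded and Lipschitz in the coefficients `d`
as soon as the density `ρ(Ψ_d)` is; the density is quadratic and `⟨Ψ_d, Φ_k⟩` linear in `d`, so
both are bounded and Lipschitz on bounded sets of coefficients. Writing
`V_d P_d - V_b P_b = (V_d - V_b) P_d + V_b (P_d - P_b)` then bounds the integrand uniformly by a
multiple of `‖d - b‖` on `Ω`, which has finite measure.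
-/

open MeasureTheory Metric Function Module Set
open scoped NNReal

section HartreePotential

variable {E : Type*} [NormedAddCommGroup E]

theorem abs_div_norm_sub_le_indicator {f : E → ℝ} {C R : ℝ} (hfC : ∀ y, |f y| ≤ C)
    (hf : support f ⊆ ball 0 R) {x : E} (hx : x ∈ ball 0 R) (y : E) :
    |f y / ‖x - y‖| ≤ C * (ball (0 : E) (2 * R)).indicator (fun z => ‖z‖⁻¹) (x - y) := by
  by_cases hy : f y = 0
  · simp only [hy, zero_div, abs_zero]
    exact mul_nonneg ((abs_nonneg _).trans (hfC y))
      (indicator_nonneg (fun z _ => inv_nonneg.2 (norm_nonneg z)) _)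
  have hxy : x - y ∈ ball (0 : E) (2 * R) := by
    rw [mem_ball_zero_iff] at hx ⊢
    linarith [norm_sub_le x y, mem_ball_zero_iff.1 (hf hy)]
  rw [indicator_of_mem hxy, abs_div, abs_norm, div_eq_mul_inv]
  gcongr
  exact hfC y

variable [MeasurableSpace E] {μ : Measure E}

noncomputable def hartreePotential (μ : Measure E) (ρ : E → ℝ) (x : E) : ℝ :=
  ∫ y, ρ y / ‖x - y‖ ∂μ

theorem hartreePotential_sub {f g : E → ℝ} {x : E}
    (hf : Integrable (fun y => f y / ‖x - y‖) μ) (hg : Integrable (fun y => g y / ‖x - y‖) μ) :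
    hartreePotential μ (f - g) x = hartreePotential μ f x - hartreePotential μ g x := by
  simp only [hartreePotential, Pi.sub_apply, sub_div]
  exact integral_sub hf hg

variable [NormedSpace ℝ E] [FiniteDimensional ℝ E] [BorelSpace E] [μ.IsAddHaarMeasure]

theorem integrableOn_inv_norm_ball (hE : 2 ≤ finrank ℝ E) (r : ℝ) :
    IntegrableOn (fun z : E => ‖z‖⁻¹) (ball 0 r) μ := by
  refine integrableOn_ball_of_norm_le_rpow (C := 1) (α := 1) (by omega)
    (by exact_mod_cast hE) (ae_of_all _ fun z => ?_) (by fun_prop)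
  simp [Real.rpow_neg_one]

theorem integrable_indicator_ball_inv_norm_sub (hE : 2 ≤ finrank ℝ E) (r : ℝ) (x : E) :
    Integrable (fun y => (ball (0 : E) r).indicator (fun z => ‖z‖⁻¹) (x - y)) μ :=
  ((integrableOn_inv_norm_ball hE r).integrable_indicator measurableSet_ball).comp_sub_left x

theorem integrable_div_norm_sub (hE : 2 ≤ finrank ℝ E) {f : E → ℝ} {C R : ℝ}
    (hfm : AEStronglyMeasurable f μ) (hfC : ∀ y, |f y| ≤ C) (hf : support f ⊆ ball 0 R)
    {x : E} (hx : x ∈ ball 0 R) : Integrable (fun y => f y / ‖x - y‖) μ :=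
  ((integrable_indicator_ball_inv_norm_sub hE (2 * R) x).const_mul C).mono'
    (hfm.div₀ (continuous_const.sub continuous_id).norm.aestronglyMeasurable)
    (ae_of_all _ (abs_div_norm_sub_le_indicator hfC hf hx))

theorem abs_hartreePotential_le (hE : 2 ≤ finrank ℝ E) {f : E → ℝ} {C R : ℝ}
    (hfC : ∀ y, |f y| ≤ C) (hf : support f ⊆ ball 0 R) {x : E} (hx : x ∈ ball 0 R) :
    |hartreePotential μ f x| ≤ C * ∫ z in ball 0 (2 * R), ‖z‖⁻¹ ∂μ :=
  calc |hartreePotential μ f x| = ‖∫ y, f y / ‖x - y‖ ∂μ‖ := rfl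
    _ ≤ ∫ y, C * (ball (0 : E) (2 * R)).indicator (fun z => ‖z‖⁻¹) (x - y) ∂μ :=
        norm_integral_le_of_norm_le ((integrable_indicator_ball_inv_norm_sub hE _ x).const_mul C)
          (ae_of_all _ (abs_div_norm_sub_le_indicator hfC hf hx))
    _ = C * ∫ z in ball 0 (2 * R), ‖z‖⁻¹ ∂μ := by
        rw [integral_const_mul, integral_sub_left_eq_self
          ((ball (0 : E) (2 * R)).indicator fun z => ‖z‖⁻¹) μ x,
          integral_indicator measurableSet_ball]

theorem abs_hartreePotential_sub_le (hE : 2 ≤ finrank ℝ E) {f g : E → ℝ} {C K R : ℝ}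
    (hfm : AEStronglyMeasurable f μ) (hgm : AEStronglyMeasurable g μ) (hfC : ∀ y, |f y| ≤ C)
    (hgC : ∀ y, |g y| ≤ C) (hfg : ∀ y, |f y - g y| ≤ K) (hf : support f ⊆ ball 0 R)
    (hg : support g ⊆ ball 0 R) {x : E} (hx : x ∈ ball 0 R) :
    |hartreePotential μ f x - hartreePotential μ g x| ≤ K * ∫ z in ball 0 (2 * R), ‖z‖⁻¹ ∂μ := by
  rw [← hartreePotential_sub (integrable_div_norm_sub hE hfm hfC hf hx)
    (integrable_div_norm_sub hE hgm hgC hg hx)]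
  exact abs_hartreePotential_le hE hfg ((support_sub _ _).trans (union_subset hf hg)) hx

theorem stronglyMeasurable_hartreePotential {f : E → ℝ} (hf : Measurable f) :
    StronglyMeasurable (hartreePotential μ f) :=
  ((hf.comp measurable_snd).div (measurable_fst.sub measurable_snd).norm).stronglyMeasurable
    |>.integral_prod_right'

end HartreePotential

theorem norm_mul_sub_mul_le {R : Type*} [SeminormedRing R] (a b p q : R) :
    ‖a * p - b * q‖ ≤ ‖a - b‖ * ‖p‖ + ‖b‖ * ‖p - q‖ :=
  calc ‖a * p - b * q‖ = ‖(a - b) * p + b * (p - q)‖ := by noncomm_ring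
    _ ≤ ‖a - b‖ * ‖p‖ + ‖b‖ * ‖p - q‖ :=
        (norm_add_le _ _).trans (add_le_add (norm_mul_le _ _) (norm_mul_le _ _))

theorem lipschitzOnWith_setIntegral_hartreePotential_mul {E D : Type*} [NormedAddCommGroup E]
    [NormedSpace ℝ E] [FiniteDimensional ℝ E] [MeasurableSpace E] [BorelSpace E]
    {μ : Measure E} [μ.IsAddHaarMeasure] [PseudoMetricSpace D] (hE : 2 ≤ finrank ℝ E)
    {Ω : Set E} (hΩm : MeasurableSet Ω) (hΩb : Bornology.IsBounded Ω)
    {s : Set D} {ρ : D → E → ℝ} {P : D → E → ℂ} {Cρ CP : ℝ} {Kρ KP : ℝ≥0}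
    (hρm : ∀ c, Measurable (ρ c)) (hρΩ : ∀ c, support (ρ c) ⊆ Ω)
    (hρC : ∀ c ∈ s, ∀ y, |ρ c y| ≤ Cρ) (hρK : ∀ y, LipschitzOnWith Kρ (ρ · y) s)
    (hPm : ∀ c, AEStronglyMeasurable (P c) μ) (hPC : ∀ c ∈ s, ∀ x, ‖P c x‖ ≤ CP)
    (hPK : ∀ x, LipschitzOnWith KP (P · x) s) :
    ∃ L, LipschitzOnWith L
      (fun c => ∫ x in Ω, (hartreePotential μ (ρ c) x : ℂ) * P c x ∂μ) s := by
  obtain ⟨R, hΩR⟩ := hΩb.subset_ball 0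
  set J := ∫ z in ball (0 : E) (2 * R), ‖z‖⁻¹ ∂μ
  have hJ : 0 ≤ J := setIntegral_nonneg measurableSet_ball fun z _ => inv_nonneg.2 (norm_nonneg z)
  have hρR c : support (ρ c) ⊆ ball 0 R := (hρΩ c).trans hΩR
  have hV c (hc : c ∈ s) x (hx : x ∈ Ω) : ‖(hartreePotential μ (ρ c) x : ℂ)‖ ≤ Cρ * J := by
    rw [Complex.norm_real]
    exact abs_hartreePotential_le hE (hρC c hc) (hρR c) (hΩR hx)
  have hVK d (hd : d ∈ s) b (hb : b ∈ s) x (hx : x ∈ Ω) :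
      ‖(hartreePotential μ (ρ d) x : ℂ) - hartreePotential μ (ρ b) x‖ ≤ Kρ * dist d b * J := by
    rw [← Complex.ofReal_sub, Complex.norm_real]
    exact abs_hartreePotential_sub_le hE (hρm d).aestronglyMeasurable
      (hρm b).aestronglyMeasurable (hρC d hd) (hρC b hb) (fun y => (hρK y).dist_le_mul d hd b hb)
      (hρR d) (hρR b) (hΩR hx)
  have hint c (hc : c ∈ s) :
      IntegrableOn (fun x => (hartreePotential μ (ρ c) x : ℂ) * P c x) Ω μ := by
    refine Measure.integrableOn_of_bounded hΩb.measure_lt_top.ne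
      ((Complex.continuous_ofReal.comp_aestronglyMeasurable
        (stronglyMeasurable_hartreePotential (hρm c)).aestronglyMeasurable).mul (hPm c))
      (M := Cρ * J * CP) ((ae_restrict_iff' hΩm).2 (ae_of_all _ fun x hx => ?_))
    rw [norm_mul]
    exact mul_le_mul (hV c hc x hx) (hPC c hc x) (norm_nonneg _)
      (mul_nonneg ((abs_nonneg _).trans (hρC c hc 0)) hJ)
  refine ⟨((Kρ * CP + Cρ * KP) * J * μ.real Ω).toNNReal,
    LipschitzOnWith.of_dist_le' fun d hd b hb => ?_⟩
  have hCρ : 0 ≤ Cρ := (abs_nonneg _).trans (hρC b hb 0)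
  rw [dist_eq_norm, ← integral_sub (hint d hd) (hint b hb)]
  calc _ ≤ (Kρ * CP + Cρ * KP) * J * dist d b * μ.real Ω := by
        refine norm_setIntegral_le_of_norm_le_const hΩb.measure_lt_top fun x hx => ?_
        calc _ ≤ _ := norm_mul_sub_mul_le _ _ _ _
          _ ≤ Kρ * dist d b * J * CP + Cρ * J * (KP * dist d b) := by
              gcongr
              · exact hVK d hd b hb x hx
              · exact hPC d hd x
              · exact hV b hb x hx
              · rw [← dist_eq_norm]
                exact (hPK x).dist_le_mul d hd b hb
          _ = _ := by ring
    _ = (Kρ * CP + Cρ * KP) * J * μ.real Ω * dist d b := by ring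

theorem LipschitzOnWith.norm_sq {α F : Type*} [PseudoMetricSpace α] [SeminormedAddCommGroup F]
    {g : α → F} {K M : ℝ≥0} {s : Set α} (hg : LipschitzOnWith K g s)
    (hM : ∀ c ∈ s, ‖g c‖ ≤ M) : LipschitzOnWith (2 * M * K) (fun c => ‖g c‖ ^ 2) s := by
  refine LipschitzOnWith.of_dist_le_mul fun d hd b hb => ?_
  rw [Real.dist_eq, sq_sub_sq, abs_mul, NNReal.coe_mul, mul_assoc]
  refine mul_le_mul ?_ ((abs_norm_sub_norm_le _ _).trans ?_) (abs_nonneg _) (by positivity)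
  · rw [abs_of_nonneg (by positivity)]
    push_cast
    linarith [hM d hd, hM b hb]
  · rw [← dist_eq_norm]
    exact hg.dist_le_mul d hd b hb

theorem exists_forall_sum_nnnorm_le {ι X F : Type*} [Fintype ι] [TopologicalSpace X]
    [NormedAddCommGroup F] {Φ : ι → X → F} (hc : ∀ l, Continuous (Φ l))
    (hs : ∀ l, HasCompactSupport (Φ l)) : ∃ B : ℝ≥0, ∀ x, ∑ l, ‖Φ l x‖₊ ≤ B := by
  choose C hC using fun l => (hc l).bounded_above_of_compact_support (hs l)
  refine ⟨∑ l, (C l).toNNReal, fun x => Finset.sum_le_sum fun l _ => ?_⟩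
  rw [← NNReal.coe_le_coe, coe_nnnorm]
  exact (hC l x).trans (Real.le_coe_toNNReal _)

section GalerkinSum

variable {𝕜 ι κ X F : Type*} [RCLike 𝕜] [Fintype ι] [Fintype κ]

theorem lipschitzWith_sum_smul [SeminormedAddCommGroup F] [NormedSpace 𝕜 F] (v : ι → F) :
    LipschitzWith (∑ l, ‖v l‖₊) (fun c : EuclideanSpace 𝕜 ι => ∑ l, c l • v l) := by
  refine LipschitzWith.of_dist_le_mul fun d b => ?_
  rw [dist_eq_norm, dist_eq_norm, ← Finset.sum_sub_distrib, NNReal.coe_sum, Finset.sum_mul]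
  refine (norm_sum_le _ _).trans (Finset.sum_le_sum fun l _ => ?_)
  rw [← sub_smul, norm_smul, mul_comm, coe_nnnorm]
  gcongr
  exact PiLp.norm_apply_le (d - b) l

theorem norm_sum_smul_le_of_mem_closedBall [SeminormedAddCommGroup F] [NormedSpace 𝕜 F]
    {Φ : ι → X → F} {B : ℝ≥0} (hB : ∀ x, ∑ l, ‖Φ l x‖₊ ≤ B) {ε : ℝ}
    {c : EuclideanSpace 𝕜 ι} (hc : c ∈ closedBall 0 ε) (x : X) :
    ‖∑ l, c l • Φ l x‖ ≤ ↑(B * ε.toNNReal) :=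
  calc _ ≤ B * ‖c‖ := ((lipschitzWith_sum_smul _).weaken (hB x)).norm_le_mul (by simp) c
    _ ≤ _ := by
      push_cast
      gcongr
      exact (mem_closedBall_zero_iff.1 hc).trans (Real.le_coe_toNNReal ε)

theorem lipschitzOnWith_norm_sum_smul_sq [SeminormedAddCommGroup F] [NormedSpace 𝕜 F]
    {Φ : ι → X → F} {B : ℝ≥0} (hB : ∀ x, ∑ l, ‖Φ l x‖₊ ≤ B) (ε : ℝ) (x : X) :
    LipschitzOnWith (2 * (B * ε.toNNReal) * B)
      (fun c : EuclideanSpace 𝕜 ι => ‖∑ l, c l • Φ l x‖ ^ 2) (closedBall 0 ε) :=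
  ((lipschitzWith_sum_smul _).weaken (hB x)).lipschitzOnWith.norm_sq
    fun _ hc => norm_sum_smul_le_of_mem_closedBall hB hc x

theorem lipschitzWith_inner_sum_smul [SeminormedAddCommGroup F] [InnerProductSpace 𝕜 F]
    {Φ : ι → X → F} {B : ℝ≥0} (hB : ∀ x, ∑ l, ‖Φ l x‖₊ ≤ B) {a : F} (ha : ‖a‖₊ ≤ B) (x : X) :
    LipschitzWith (B * B) (fun c : EuclideanSpace 𝕜 ι => inner 𝕜 a (∑ l, c l • Φ l x)) := by
  refine ((innerSL 𝕜 a).lipschitz.comp ((lipschitzWith_sum_smul _).weaken (hB x))).weaken ?_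
  gcongr
  rwa [← NNReal.coe_le_coe, coe_nnnorm, innerSL_apply_norm]

theorem support_norm_sum_smul_sq_subset [SeminormedAddCommGroup F] [Module 𝕜 F]
    (Φ : ι → X → F) (c : ι → 𝕜) :
    support (fun x => ‖∑ l, c l • Φ l x‖ ^ 2) ⊆ ⋃ l, support (Φ l) := fun x hx => by
  by_contra hxΦ
  simp only [mem_iUnion, mem_support, not_exists, not_not] at hxΦ
  simp [hxΦ] at hx

theorem sum_norm_sum_smul_apply_sq (c : ι → 𝕜) (v : ι → EuclideanSpace 𝕜 κ) :
    ∑ j, ‖∑ l, c l • v l j‖ ^ 2 = ‖∑ l, c l • v l‖ ^ 2 := by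
  simp [EuclideanSpace.norm_sq_eq, WithLp.ofLp_sum]

theorem sum_sum_smul_apply_mul_conj (c : ι → ℂ) (v : ι → EuclideanSpace ℂ κ)
    (w : EuclideanSpace ℂ κ) :
    ∑ j, (∑ l, c l • v l j) * (starRingEnd ℂ) (w j) = inner ℂ w (∑ l, c l • v l) := by
  rw [PiLp.inner_apply]
  refine Finset.sum_congr rfl fun j _ => ?_
  simp [WithLp.ofLp_sum, mul_comm]

end GalerkinSum

theorem galerkin_hartree_locally_lipschitz_general
    (Ω : Set (EuclideanSpace ℝ (Fin 3)))
    (hΩo : IsOpen Ω) (hΩb : Bornology.IsBounded Ω)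
    (N : ℕ) (m : ℕ)
    (Φ : Fin m → EuclideanSpace ℝ (Fin 3) → EuclideanSpace ℂ (Fin N))
    (hΦ : ∀ l, ContDiff ℝ 1 (Φ l))
    (hΦsupp : ∀ l, HasCompactSupport (Φ l))
    (hΦΩ : ∀ l, tsupport (Φ l) ⊆ Ω)
    (k : Fin m) :
    ∀ ε > (0 : ℝ), ∃ L > (0 : ℝ), ∀ d b : EuclideanSpace ℂ (Fin m),
      ‖d‖ ≤ ε → ‖b‖ ≤ ε →
      ‖(∫ x in Ω,
            ((∫ y, (∑ j, ‖∑ l, d l • Φ l y j‖ ^ 2) / ‖x - y‖ ∂volume : ℝ) : ℂ)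
              * ∑ j, (∑ l, d l • Φ l x j) * (starRingEnd ℂ) (Φ k x j) ∂volume)
        - ∫ x in Ω,
            ((∫ y, (∑ j, ‖∑ l, b l • Φ l y j‖ ^ 2) / ‖x - y‖ ∂volume : ℝ) : ℂ)
              * ∑ j, (∑ l, b l • Φ l x j) * (starRingEnd ℂ) (Φ k x j) ∂volume‖
        ≤ L * ‖d - b‖ := by
  intro ε hε
  have hΦc l := (hΦ l).continuous
  obtain ⟨B, hB⟩ := exists_forall_sum_nnnorm_le hΦc hΦsupp
  have hΦk x : ‖Φ k x‖₊ ≤ B :=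
    (Finset.single_le_sum (fun _ _ => zero_le) (Finset.mem_univ k)).trans (hB x)
  simp only [sum_norm_sum_smul_apply_sq, sum_sum_smul_apply_mul_conj]
  obtain ⟨L, hL⟩ := lipschitzOnWith_setIntegral_hartreePotential_mul (μ := volume)
    (by simp) hΩo.measurableSet hΩb (s := closedBall (0 : EuclideanSpace ℂ (Fin m)) ε)
    (ρ := fun c y => ‖∑ l, c l • Φ l y‖ ^ 2) (P := fun c x => inner ℂ (Φ k x) (∑ l, c l • Φ l x))
    (fun c => (by fun_prop : Continuous _).measurable)
    (fun c => (support_norm_sum_smul_sq_subset Φ c).trans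
      (iUnion_subset fun l => (subset_tsupport _).trans (hΦΩ l)))
    (fun c hc y => by
      rw [abs_sq]
      exact pow_le_pow_left₀ (norm_nonneg _) (norm_sum_smul_le_of_mem_closedBall hB hc y) 2)
    (lipschitzOnWith_norm_sum_smul_sq hB ε)
    (fun c => (by fun_prop : Continuous _).aestronglyMeasurable)
    (fun c hc x => (norm_inner_le_norm _ _).trans
      (mul_le_mul (hΦk x) (norm_sum_smul_le_of_mem_closedBall hB hc x) (norm_nonneg _) B.2))
    (fun x => (lipschitzWith_inner_sum_smul hB (hΦk x) x).lipschitzOnWith)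
  refine ⟨↑(L + 1), by positivity, fun d b hd hb => ?_⟩
  exact (hL.weaken le_self_add).norm_sub_le (mem_closedBall_zero_iff.2 hd)
    (mem_closedBall_zero_iff.2 hb)

/-- Local Lipschitz continuity of the Hartree term in the Galerkin ODE system.
Let `Ω ⊆ ℝ³` be bounded open, and let `Φ₁, …, Φₘ : ℝ³ → ℂᴺ` be `C¹` with compact
support contained in `Ω`.  For `d ∈ ℂᵐ` set `Ψ_d = Σₗ dˡ Φₗ` and
`G^k(d) = ∫_Ω V_H(Ψ_d)(x) ⟨Ψ_d(x), Φₖ(x)⟩_{ℂᴺ} dx`, where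
`V_H(Ψ)(x) = ∫_{ℝ³} ρ(Ψ)(y)/‖x−y‖ dy` and `ρ(Ψ) = Σⱼ |ψⱼ|²`.
Then every `G^k` is locally Lipschitz: for every `ε > 0` there is `L > 0` with
`|G^k(d) − G^k(b)| ≤ L |d − b|` whenever `|d| ≤ ε` and `|b| ≤ ε`. -/
theorem galerkin_hartree_locally_lipschitz
    (Ω : Set (EuclideanSpace ℝ (Fin 3)))
    (hΩo : IsOpen Ω) (hΩb : Bornology.IsBounded Ω)
    (N : ℕ) (hN : 1 ≤ N) (m : ℕ) (hm : 1 ≤ m)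
    (Φ : Fin m → EuclideanSpace ℝ (Fin 3) → EuclideanSpace ℂ (Fin N))
    (hΦ : ∀ l, ContDiff ℝ 1 (Φ l))
    (hΦsupp : ∀ l, HasCompactSupport (Φ l))
    (hΦΩ : ∀ l, tsupport (Φ l) ⊆ Ω)
    (k : Fin m) :
    ∀ ε > (0 : ℝ), ∃ L > (0 : ℝ), ∀ d b : EuclideanSpace ℂ (Fin m),
      ‖d‖ ≤ ε → ‖b‖ ≤ ε →
      ‖(∫ x in Ω,
            ((∫ y, (∑ j, ‖∑ l, d l • Φ l y j‖ ^ 2) / ‖x - y‖ ∂volume : ℝ) : ℂ)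
              * ∑ j, (∑ l, d l • Φ l x j) * (starRingEnd ℂ) (Φ k x j) ∂volume)
        - ∫ x in Ω,
            ((∫ y, (∑ j, ‖∑ l, b l • Φ l y j‖ ^ 2) / ‖x - y‖ ∂volume : ℝ) : ℂ)
              * ∑ j, (∑ l, b l • Φ l x j) * (starRingEnd ℂ) (Φ k x j) ∂volume‖
        ≤ L * ‖d - b‖ :=
  galerkin_hartree_locally_lipschitz_general Ω hΩo hΩb N m Φ hΦ hΦsupp hΦΩ k
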